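/- arXiv:1204.2972 — 3 statements merged into one kernel-verified Lean document; each statement's English description precedes it below -/
import Mathlib

section
/- Let (V, g, J) be a real inner product space with orthogonal complex structure. Define the Bianchi operator b on V-valued 2-forms by (bB)(X,Y,Z) = (1/3)(B(X;Y,Z) + B(Y;Z,X) + B(Z;X,Y)), and M by (Mω)(X,Y,Z) = ω(X,JY,JZ) (for a 3-form ω this means applying J to the last two arguments). For every real 3-form ω lying in the '+' part (i.e. ω equals the sum of its (2,1) and (1,2) components under the complexified splitting induced by J), one has b(Mω) = (1/3)ω. -/
/-- On a real inner product space with orthogonal complex structure `J`,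
for every real 3-form `ω` of type '+' (i.e. sum of its (2,1) and (1,2) parts, which is
characterized by `ω(JX,JY,Z)+ω(JX,Y,JZ)+ω(X,JY,JZ) = ω(X,Y,Z)`), one has
`b(Mω) = (1/3)ω`, where `(Mω)(X,Y,Z) = ω(X,JY,JZ)` and `b` is the Bianchi
symmetrization with factor `1/3`. -/
theorem stmt1 {V : Type*} [NormedAddCommGroup V] [InnerProductSpace ℝ V]
    (J : V →ₗ[ℝ] V) (hJ2 : ∀ x, J (J x) = -x)
    (hJg : ∀ x y, (inner ℝ (J x) (J y) : ℝ) = inner ℝ x y)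
    (ω : V →ₗ[ℝ] V →ₗ[ℝ] V →ₗ[ℝ] ℝ)
    (halt1 : ∀ x y z, ω x y z = - ω y x z)
    (halt2 : ∀ x y z, ω x y z = - ω x z y)
    (hplus : ∀ x y z, ω (J x) (J y) z + ω (J x) y (J z) + ω x (J y) (J z) = ω x y z) :
    ∀ x y z, (1/3 : ℝ) * (ω x (J y) (J z) + ω y (J z) (J x) + ω z (J x) (J y))
      = (1/3 : ℝ) * ω x y z := by
  have cyc : ∀ x y z : V, ω x y z = ω y z x := by
    intro x y z
    rw [halt1, halt2]; ring
  intro x y z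
  have h := hplus x y z
  rw [cyc (J x) (J y) z, cyc (J y) z (J x), cyc (J x) y (J z)] at h
  rw [← h]; ring
end

section
/- Let (V, g, J) be a real inner product space with orthogonal complex structure. The Bianchi operator b restricted to V-valued 2-forms of type (2,0) is a linear isomorphism onto the space Ω⁺ of 3-forms of type '+', with inverse given by ω ↦ (3/2)(ω − Mω), where Mω(X,Y,Z) = ω(X,JY,JZ). In particular, for every B of type (2,0): B = (3/2)(bB − M(bB)). -/
/-- Bianchi symmetrization of a trilinear form (with factor 1/3). -/
noncomputable def bianchi3 {V : Type*} [NormedAddCommGroup V] [InnerProductSpace ℝ V]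
    (B : V →ₗ[ℝ] V →ₗ[ℝ] V →ₗ[ℝ] ℝ) (x y z : V) : ℝ :=
  (1/3 : ℝ) * (B x y z + B y z x + B z x y)

/-- The Bianchi operator `b` restricted to `V`-valued 2-forms of type (2,0)
(written as trilinear forms `B(X;Y,Z)`, alternating in the last two arguments, with
`B(X;JY,Z) = -B(JX;Y,Z)` and `B(X;JY,JZ) = -B(X;Y,Z)`) is a linear isomorphism onto the
space `Ω⁺` of 3-forms of type '+', with inverse `ω ↦ (3/2)(ω - Mω)`; in particular
`B = (3/2)(bB - M(bB))` for every `B` of type (2,0). -/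
theorem stmt4 {V : Type*} [NormedAddCommGroup V] [InnerProductSpace ℝ V]
    (J : V →ₗ[ℝ] V) (hJ2 : ∀ x, J (J x) = -x)
    (hJg : ∀ x y, (inner ℝ (J x) (J y) : ℝ) = inner ℝ x y) :
    -- b maps Ω^{2,0} into Ω⁺ and (3/2)(id - M) ∘ b = id on Ω^{2,0}
    (∀ B : V →ₗ[ℝ] V →ₗ[ℝ] V →ₗ[ℝ] ℝ,
      (∀ x y z, B x y z = - B x z y) →
      (∀ x y z, B x (J y) z = - B (J x) y z) →
      (∀ x y z, B x (J y) (J z) = - B x y z) →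
      ((∀ x y z, bianchi3 B x y z = - bianchi3 B y x z) ∧
       (∀ x y z, bianchi3 B x y z = - bianchi3 B x z y) ∧
       (∀ x y z, bianchi3 B (J x) (J y) z + bianchi3 B (J x) y (J z)
          + bianchi3 B x (J y) (J z) = bianchi3 B x y z) ∧
       (∀ x y z, B x y z
          = (3/2 : ℝ) * (bianchi3 B x y z - bianchi3 B x (J y) (J z))))) ∧
    -- surjectivity: every ω ∈ Ω⁺ is bB for B := (3/2)(ω - Mω), which is of type (2,0)
    (∀ ω : V →ₗ[ℝ] V →ₗ[ℝ] V →ₗ[ℝ] ℝ,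
      (∀ x y z, ω x y z = - ω y x z) →
      (∀ x y z, ω x y z = - ω x z y) →
      (∀ x y z, ω (J x) (J y) z + ω (J x) y (J z) + ω x (J y) (J z) = ω x y z) →
      ((∀ x y z, (3/2 : ℝ) * (ω x y z - ω x (J y) (J z))
          = -((3/2 : ℝ) * (ω x z y - ω x (J z) (J y)))) ∧
       (∀ x y z, (3/2 : ℝ) * (ω x (J y) z - ω x (J (J y)) (J z))
          = -((3/2 : ℝ) * (ω (J x) y z - ω (J x) (J y) (J z)))) ∧
       (∀ x y z, (3/2 : ℝ) * (ω x (J y) (J z) - ω x (J (J y)) (J (J z)))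
          = -((3/2 : ℝ) * (ω x y z - ω x (J y) (J z)))) ∧
       (∀ x y z, (1/3 : ℝ) * (((3/2 : ℝ) * (ω x y z - ω x (J y) (J z)))
          + ((3/2 : ℝ) * (ω y z x - ω y (J z) (J x)))
          + ((3/2 : ℝ) * (ω z x y - ω z (J x) (J y)))) = ω x y z))) := by

  constructor
  · intro B halt hmix hJJ
    have hJ3 : ∀ x y z, B x y (J z) = - B (J x) y z := by
      intro x y z
      rw [halt x y (J z), hmix x z y, halt (J x) z y]
      ring
    have h12 : ∀ x y z, B (J x) (J y) z = B x y z := by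
      intro x y z
      have := hmix (J x) y z
      rw [hJ2 x] at this
      simp only [map_neg, LinearMap.neg_apply] at this
      linarith
    have h13 : ∀ x y z, B (J x) y (J z) = B x y z := by
      intro x y z
      have := hJ3 (J x) y z
      rw [hJ2 x] at this
      simp only [map_neg, LinearMap.neg_apply] at this
      linarith
    refine ⟨?_, ?_, ?_, ?_⟩
    · intro x y z
      simp only [bianchi3]
      have h1 := halt y x z
      have h2 := halt x z y
      have h3 := halt z y x
      linarith
    · intro x y z
      simp only [bianchi3]
      have h1 := halt x y z
      have h2 := halt z y x
      have h3 := halt y x z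
      linarith
    · intro x y z
      simp only [bianchi3]
      have a1 := h12 x y z
      have a2 := h13 y z x
      have a3 := hJJ z x y
      have b1 := h13 x y z
      have b2 := hJJ y z x
      have b3 := h12 z x y
      have c1 := hJJ x y z
      have c2 := h12 y z x
      have c3 := h13 z x y
      linarith
    · intro x y z
      simp only [bianchi3]
      have c1 := hJJ x y z
      have c2 := h12 y z x
      have c3 := h13 z x y
      linarith
  · intro ω ha hb hJ
    have hcyc : ∀ x y z, ω y z x = ω x y z := by
      intro x y z
      rw [hb y z x, ha y x z]
      ring
    refine ⟨?_, ?_, ?_, ?_⟩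
    · intro x y z
      have h1 := hb x y z
      have h2 := hb x (J y) (J z)
      linarith
    · intro x y z
      have h := hJ (J x) y z
      rw [hJ2 x] at h
      simp only [map_neg, LinearMap.neg_apply, hJ2] at h ⊢
      linarith
    · intro x y z
      simp only [hJ2, map_neg, LinearMap.neg_apply]
      ring
    · intro x y z
      have h1 := hcyc x y z
      have h2 := hcyc z x y
      have h3 := hcyc (J x) y (J z)
      have h4 := hcyc (J y) z (J x)
      have h5 := hcyc (J x) (J y) z
      have h6 := hJ x y z
      linarith
end

section
/- Let (M, g, η, J) be a metric contact manifold with Kähler form F(X,Y) = g(JX,Y) and Levi-Civita connection ∇^g. Then (∇^g_X F)(Y,Z) = −(∇^g_X F)(JY, JZ) for all X, Y, Z sections of the contact distribution ker η; i.e. the (1,1)-part of ∇^g F over the contact distribution vanishes. -/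
/-- On a metric contact manifold with Kähler form `F(Y,Z) = g(JY,Z)` and
Levi-Civita connection `∇`, one has `(∇_X F)(Y,Z) = -(∇_X F)(JY,JZ)` for all sections
`X, Y, Z` of the contact distribution `ker η`; i.e. the (1,1)-part of `∇F` over the
contact distribution vanishes.  Here
`(∇_X F)(Y,Z) = X(F(Y,Z)) - F(∇_X Y, Z) - F(Y, ∇_X Z)`.

Axiomatized setting: `X` vector fields, `C` functions, `D` directional derivative,
`bracket` Lie bracket, `g` metric, `η = g(ξ,·)`, `J` the contact endomorphism with
`J² = -Id + η ⊗ ξ` and `g(Jv,Jw) = g(v,w) - η(v)η(w)`; `∇` is the Levi-Civita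
connection: metric and torsion-free. -/
theorem stmt12 {X C : Type*} [AddCommGroup X] [Module ℝ X]
    [CommRing C] [Algebra ℝ C] [Module C X]
    (D : X → C → C) (hD0 : ∀ v, D v 0 = 0) (hD1 : ∀ v, D v 1 = 0)
    (bracket : X → X → X)
    (g : X → X → C) (hgsymm : ∀ v w, g v w = g w v)
    (hgadd : ∀ u v w, g u (v + w) = g u v + g u w)
    (hgneg : ∀ u v, g u (-v) = -(g u v))
    (ξ : X) (η : X → C) (hη : ∀ v, η v = g ξ v) (hunit : g ξ ξ = 1)
    (J : X → X) (hJadd : ∀ v w, J (v + w) = J v + J w)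
    (hJ2 : ∀ v, J (J v) = -v + (η v) • ξ) (hJξ : J ξ = 0)
    (hηJ : ∀ v, η (J v) = 0)
    (hgJJ : ∀ v w, g (J v) (J w) = g v w - η v * η w)
    (nabla : X → X → X)
    (hmetric : ∀ u v w, D u (g v w) = g (nabla u v) w + g v (nabla u w))
    (htorsionfree : ∀ u v, nabla u v - nabla v u = bracket u v) :
    ∀ x y z, η x = 0 → η y = 0 → η z = 0 →
      D x (g (J y) z) - g (J (nabla x y)) z - g (J y) (nabla x z)
        = -(D x (g (J (J y)) (J z)) - g (J (nabla x (J y))) (J z)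
            - g (J (J y)) (nabla x (J z))) := by
  intro x y z hx hy hz
  -- g is also additive/neg in the first argument
  have gneg1 : ∀ u v, g (-u) v = -(g u v) := by
    intro u v
    rw [hgsymm (-u) v, hgneg v u, hgsymm v u]
  -- J² on the contact distribution
  have hJJy : J (J y) = -y := by rw [hJ2, hy, zero_smul, add_zero]
  have hJJz : J (J z) = -z := by rw [hJ2, hz, zero_smul, add_zero]
  -- skew-symmetry of F against vectors in the distribution
  have hskew : ∀ u, g (J u) z = -(g u (J z)) := by
    intro u
    have h := hgJJ u (J z)
    rw [hJJz, hηJ, mul_zero, sub_zero, hgneg] at h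
    linear_combination -h
  -- ∇_x(-y) pairs like -∇_x y against anything
  have hneg : ∀ w, g (nabla x (-y)) w = -(g (nabla x y) w) := by
    intro w
    have e1 : D x (g (-y) (-w)) = D x (g y w) := by
      rw [show g (-y) (-w) = g y w by
        rw [hgneg (-y) w, hgsymm (-y) w, hgneg w y, neg_neg, hgsymm w y]]
    have e2 : D x (g (-y) w) = D x (g y (-w)) := by
      rw [show g (-y) w = g y (-w) by
        rw [hgneg y w, hgsymm (-y) w, hgneg w y, hgsymm w y]]
    rw [hmetric x (-y) (-w), hmetric x y w] at e1
    rw [hmetric x (-y) w, hmetric x y (-w)] at e2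
    rw [hgneg, gneg1] at e1
    rw [hgneg, gneg1] at e2
    have h2 : g (nabla x (-y)) w + g (nabla x y) w
        + (g (nabla x (-y)) w + g (nabla x y) w) = 0 := by
      linear_combination e2 - e1
    have h2' : (2:ℝ) • (g (nabla x (-y)) w + g (nabla x y) w) = 0 := by
      rw [two_smul]; exact h2
    have h3 : g (nabla x (-y)) w + g (nabla x y) w = 0 := by
      have h := congrArg (fun t : C => (2⁻¹:ℝ) • t) h2'
      simpa [smul_smul] using h
    linear_combination h3
  -- expand the two derivative terms via metric compatibility
  rw [hmetric x (J y) z, hmetric x (J (J y)) (J z)]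
  rw [hJJy, hneg (J z)]
  have hA : g (J (nabla x y)) z = -(g (nabla x y) (J z)) := hskew (nabla x y)
  have hB : g (J (nabla x (J y))) (J z) = g (nabla x (J y)) z := by
    rw [hgJJ, hz, mul_zero, sub_zero]
  rw [hA, hB]
  ring
end
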